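/- arXiv:0903.0138 — 4 statements merged into one kernel-verified Lean document; each statement's English description precedes it below -/
import Mathlib

section
/- The number of isomorphism classes of finite trees with at most E edges in which every vertex has valence 1 or 3 (trivalent trees) grows at least exponentially in E: there exist constants c > 1 and E₀ such that for all E ≥ E₀, the number of such isomorphism classes is at least c^E. -/
/-!
For `C ⊆ [k + 3, 2k + 3)` take a path `(0,0), …, (M,0)` with `M = 2k + 5`, hang a leaf `(i,1)`
from every inner path vertex, and for `i ∈ C` give `(i,1)` two further leaves. This caterpillar is
a trivalent tree with at most `6k + 9` edges. Its vertices adjacent to two distinct leaves are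
`(1,0)`, `(M-1,0)` and the `(i,1)` with `i ∈ C`. Heights along the path show that the distances
between such vertices that fall in `[k + 3, 2k + 3)` are exactly the distances `i` from `(1,0)` to
the `(i,1)`, so `C` is an isomorphism invariant: the `2 ^ k` choices of `C` give pairwise
non-isomorphic trees, and `2 ^ k ≥ (2 ^ (1/12)) ^ E` once `6k + 9 ≤ E ≤ 12k`.
-/

def IsTrivalentTree {n : ℕ} (G : SimpleGraph (Fin n)) : Prop :=
  G.IsTree ∧ ∀ v : Fin n, (G.neighborSet v).ncard = 1 ∨ (G.neighborSet v).ncard = 3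

namespace SimpleGraph

variable {V W : Type*} {G : SimpleGraph V} {H : SimpleGraph W}

lemma Iso.dist_le (e : G ≃g H) (u v : V) : H.dist (e u) (e v) ≤ G.dist u v := by
  by_cases huv : G.Reachable u v
  · obtain ⟨w, hw⟩ := huv.exists_walk_length_eq_dist
    simpa [hw] using SimpleGraph.dist_le (w.map e.toHom)
  · rw [dist_eq_zero_of_not_reachable huv,
      dist_eq_zero_of_not_reachable (mt e.reachable_iff.1 huv)]

lemma Iso.dist_eq (e : G ≃g H) (u v : V) : H.dist (e u) (e v) = G.dist u v :=
  (e.dist_le u v).antisymm (by simpa using e.symm.dist_le (e u) (e v))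

lemma Iso.ncard_neighborSet (e : G ≃g H) (v : V) :
    (H.neighborSet (e v)).ncard = (G.neighborSet v).ncard := by
  simp_rw [← Nat.card_coe_set_eq]
  exact (Nat.card_congr (e.mapNeighborSet v)).symm

lemma Iso.ncard_edgeSet (e : G ≃g H) : H.edgeSet.ncard = G.edgeSet.ncard := by
  simp_rw [← Nat.card_coe_set_eq]
  exact (Nat.card_congr e.mapEdgeSet).symm

def IsCherryCenter (G : SimpleGraph V) (x : V) : Prop :=
  ∃ a b, a ≠ b ∧ G.Adj x a ∧ G.Adj x b ∧
    (G.neighborSet a).ncard = 1 ∧ (G.neighborSet b).ncard = 1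

def cherryDistances (G : SimpleGraph V) : Set ℕ :=
  {d | ∃ x y, G.IsCherryCenter x ∧ G.IsCherryCenter y ∧ G.dist x y = d}

lemma Iso.isCherryCenter (e : G ≃g H) {x : V} (hx : G.IsCherryCenter x) :
    H.IsCherryCenter (e x) := by
  obtain ⟨a, b, hab, hxa, hxb, ha, hb⟩ := hx
  exact ⟨e a, e b, e.injective.ne hab, e.map_adj_iff.2 hxa, e.map_adj_iff.2 hxb,
    by rwa [e.ncard_neighborSet], by rwa [e.ncard_neighborSet]⟩

lemma Iso.cherryDistances_subset (e : G ≃g H) : G.cherryDistances ⊆ H.cherryDistances := by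
  rintro _ ⟨x, y, hx, hy, rfl⟩
  exact ⟨e x, e y, e.isCherryCenter hx, e.isCherryCenter hy, e.dist_eq x y⟩

lemma Iso.cherryDistances_eq (e : G ≃g H) : G.cherryDistances = H.cherryDistances :=
  e.cherryDistances_subset.antisymm (by simpa using e.symm.cherryDistances_subset)

lemma Walk.le_add_length {f : V → ℕ} (hf : ∀ u v, G.Adj u v → f u ≤ f v + 1) {u v : V}
    (w : G.Walk u v) : f u ≤ f v + w.length := by
  induction w with
  | nil => simp
  | cons h _ ih => grind [Walk.length_cons]

lemma Reachable.le_add_dist {f : V → ℕ} (hf : ∀ u v, G.Adj u v → f u ≤ f v + 1) {u v : V}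
    (huv : G.Reachable u v) : f u ≤ f v + G.dist u v := by
  obtain ⟨w, hw⟩ := huv.exists_walk_length_eq_dist
  exact hw ▸ w.le_add_length hf

def parentGraph (p : V → V) : SimpleGraph V := SimpleGraph.fromRel fun u v => p u = v

variable {p : V → V} {r : V} {h : V → ℕ}

lemma parentGraph_adj {u v : V} : (parentGraph p).Adj u v ↔ u ≠ v ∧ (p u = v ∨ p v = u) :=
  fromRel_adj ..

structure IsHeightFunction (p : V → V) (r : V) (h : V → ℕ) : Prop where
  parent_root : p r = r
  height_parent : ∀ v ≠ r, h (p v) + 1 = h v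

namespace IsHeightFunction

variable (hp : IsHeightFunction p r h)
include hp

lemma parent_ne {v : V} (hv : v ≠ r) : p v ≠ v := fun he => by
  have := hp.height_parent v hv
  rw [he] at this
  omega

lemma adj_parent {v : V} (hv : v ≠ r) : (parentGraph p).Adj v (p v) :=
  parentGraph_adj.2 ⟨(hp.parent_ne hv).symm, .inl rfl⟩

lemma ne_root_of_parent_ne {v : V} (hv : p v ≠ v) : v ≠ r := by
  rintro rfl; exact hv hp.parent_root

lemma height_le_of_adj {u v : V} (huv : (parentGraph p).Adj u v) : h u ≤ h v + 1 := by
  rcases parentGraph_adj.1 huv with ⟨huv, rfl | rfl⟩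
  · exact (hp.height_parent u (hp.ne_root_of_parent_ne (Ne.symm huv))).ge
  · have := hp.height_parent v (hp.ne_root_of_parent_ne huv)
    omega

lemma reachable_root (v : V) : (parentGraph p).Reachable v r := by
  induction hv : h v using Nat.strong_induction_on generalizing v with
  | _ n ih =>
    by_cases hvr : v = r
    · exact hvr ▸ .rfl
    have := hp.height_parent v hvr
    exact (hp.adj_parent hvr).reachable.trans (ih _ (by omega) _ rfl)

lemma connected : (parentGraph p).Connected :=
  have : Nonempty V := ⟨r⟩
  .mk fun u v => (hp.reachable_root u).trans (hp.reachable_root v).symm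

lemma le_add_dist (u v : V) : h u ≤ h v + (parentGraph p).dist u v :=
  (hp.connected.preconnected u v).le_add_dist fun _ _ => hp.height_le_of_adj

noncomputable def edgeEquiv : {v // v ≠ r} ≃ (parentGraph p).edgeSet := by
  refine .ofBijective (fun v => ⟨s(v.1, p v.1), hp.adj_parent v.2⟩) ⟨?_, ?_⟩
  · rintro ⟨u, hu⟩ ⟨v, hv⟩ huv
    rcases Sym2.eq_iff.1 (Subtype.mk.inj huv) with ⟨huv, -⟩ | ⟨huv, hvu⟩
    · exact Subtype.ext huv
    · have hu' := hp.height_parent u hu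
      have hv' := hp.height_parent v hv
      dsimp only at huv hvu
      rw [← huv] at hv'
      rw [hvu] at hu'
      omega
  · rintro ⟨e, he⟩
    induction e using Sym2.ind with | _ a b => ?_
    rw [mem_edgeSet, parentGraph_adj] at he
    obtain ⟨hab, hpab | hpba⟩ := he
    · exact ⟨⟨a, hp.ne_root_of_parent_ne (hpab ▸ Ne.symm hab)⟩, by simp [hpab]⟩
    · exact ⟨⟨b, hp.ne_root_of_parent_ne (hpba ▸ hab)⟩, by simp [hpba, Sym2.eq_swap]⟩

lemma card_edgeSet_add_one [Finite V] : Nat.card (parentGraph p).edgeSet + 1 = Nat.card V := by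
  have := Fintype.ofFinite V
  classical
  rw [← Nat.card_congr hp.edgeEquiv, Nat.card_eq_fintype_card, Nat.card_eq_fintype_card,
    Fintype.card_subtype_compl, Fintype.card_subtype_eq]
  have : 0 < Fintype.card V := Fintype.card_pos_iff.2 ⟨r⟩
  omega

lemma isTree [Finite V] : (parentGraph p).IsTree :=
  isTree_iff_connected_and_card.2 ⟨hp.connected, hp.card_edgeSet_add_one⟩

end IsHeightFunction

end SimpleGraph

open SimpleGraph Finset

namespace Caterpillar

/-- `(i, 0)` for `i ≤ M` is the path, `(i, 1)` the vertex hanging from an inner path vertex `i`,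
and `(i, 2)`, `(i, 3)` the two leaves hanging from `(i, 1)` when `i ∈ C`. -/
def vertices (M : ℕ) (C : Finset ℕ) : Finset (ℕ × ℕ) :=
  range (M + 1) ×ˢ {0} ∪ Ioo 0 M ×ˢ {1} ∪ (C ∩ Ioo 0 M) ×ˢ {2, 3}

variable {M : ℕ} {C : Finset ℕ}

def parent (v : ℕ × ℕ) : ℕ × ℕ :=
  if v.2 = 0 then (v.1 - 1, 0) else if v.2 = 1 then (v.1, 0) else (v.1, 1)

lemma mem_vertices {v : ℕ × ℕ} : v ∈ vertices M C ↔ v.2 = 0 ∧ v.1 ≤ M ∨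
    v.2 = 1 ∧ 0 < v.1 ∧ v.1 < M ∨ (v.2 = 2 ∨ v.2 = 3) ∧ v.1 ∈ C ∧ 0 < v.1 ∧ v.1 < M := by
  simp only [vertices, mem_union, mem_product, mem_range, mem_Ioo, mem_inter, mem_insert,
    mem_singleton]
  grind

lemma parent_mem {v : ℕ × ℕ} (hv : v ∈ vertices M C) : parent v ∈ vertices M C := by
  rw [mem_vertices] at *
  unfold parent
  split_ifs <;> grind

variable (M C)

def parentMap (v : vertices M C) : vertices M C := ⟨parent v, parent_mem v.2⟩

def root : vertices M C := ⟨(0, 0), by simp [mem_vertices]⟩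

def graph : SimpleGraph (vertices M C) := parentGraph (parentMap M C)

lemma isHeightFunction :
    IsHeightFunction (parentMap M C) (root M C) fun v => v.1.1 + min v.1.2 2 := by
  refine ⟨rfl, fun ⟨⟨i, a⟩, hv⟩ hne => ?_⟩
  rw [Ne, root, Subtype.mk.injEq] at hne
  rw [mem_vertices] at hv
  simp only [parentMap, parent]
  split_ifs <;> grind

lemma isTree : (graph M C).IsTree := (isHeightFunction M C).isTree

variable {M C}

lemma connected : (graph M C).Connected := (isHeightFunction M C).connected

lemma height_le_add_dist (u v : vertices M C) :
    u.1.1 + min u.1.2 2 ≤ v.1.1 + min v.1.2 2 + (graph M C).dist u v :=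
  (isHeightFunction M C).le_add_dist u v

lemma graph_adj {u v : vertices M C} :
    (graph M C).Adj u v ↔ u.1 ≠ v.1 ∧ (parent u.1 = v.1 ∨ parent v.1 = u.1) := by
  simp only [graph, parentGraph_adj, parentMap, Ne, Subtype.ext_iff]

lemma ncard_neighborSet_eq_ncard_coords (v : vertices M C) :
    ((graph M C).neighborSet v).ncard =
      {w | w ∈ vertices M C ∧ w ≠ v.1 ∧ (parent v.1 = w ∨ parent w = v.1)}.ncard := by
  rw [← Set.ncard_image_of_injective _ Subtype.val_injective]
  congr 1
  ext w
  simp only [Set.mem_image, mem_neighborSet, graph_adj, Set.mem_ofPred_eq]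
  constructor
  · rintro ⟨w, hw, rfl⟩
    exact ⟨w.2, Ne.symm hw.1, hw.2⟩
  · rintro ⟨hw, hne, hpar⟩
    exact ⟨⟨w, hw⟩, ⟨Ne.symm hne, hpar⟩, rfl⟩

lemma ncard_neighborSet (hM : 0 < M) (v : vertices M C) :
    ((graph M C).neighborSet v).ncard =
      if v.1.2 = 0 ∧ 0 < v.1.1 ∧ v.1.1 < M ∨ v.1.2 = 1 ∧ v.1.1 ∈ C then 3 else 1 := by
  obtain ⟨⟨i, a⟩, hv⟩ := v
  rw [mem_vertices] at hv
  rw [ncard_neighborSet_eq_ncard_coords]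
  dsimp only
  split_ifs with hdeg
  · rw [Set.ncard_eq_three]
    rcases hdeg with ⟨rfl, hi⟩ | ⟨rfl, hi⟩
    · refine ⟨(i - 1, 0), (i + 1, 0), (i, 1), by grind, by grind, by grind, ?_⟩
      ext ⟨j, b⟩
      simp only [mem_vertices, parent, Set.mem_ofPred_eq, Set.mem_insert_iff,
        Set.mem_singleton_iff]
      grind
    · refine ⟨(i, 0), (i, 2), (i, 3), by grind, by grind, by grind, ?_⟩
      ext ⟨j, b⟩
      simp only [mem_vertices, parent, Set.mem_ofPred_eq, Set.mem_insert_iff,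
        Set.mem_singleton_iff]
      grind
  · rw [Set.ncard_eq_one]
    refine ⟨if i = 0 ∧ a = 0 then (1, 0) else parent (i, a), ?_⟩
    ext ⟨j, b⟩
    simp only [mem_vertices, parent, Set.mem_ofPred_eq, Set.mem_singleton_iff]
    grind

lemma ncard_neighborSet_eq_one_or_three (hM : 0 < M) (v : vertices M C) :
    ((graph M C).neighborSet v).ncard = 1 ∨ ((graph M C).neighborSet v).ncard = 3 := by
  rw [ncard_neighborSet hM]
  split_ifs <;> simp

lemma ncard_edgeSet_add_one_le (hM : 0 < M) :
    (graph M C).edgeSet.ncard + 1 ≤ 2 * M + 2 * #C := by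
  rw [← Nat.card_coe_set_eq, graph, (isHeightFunction M C).card_edgeSet_add_one,
    Nat.card_eq_fintype_card, Fintype.card_coe]
  grw [vertices, card_union_le, card_union_le]
  simp only [card_product, card_range, Nat.card_Ioo, card_singleton]
  grw [card_pair (by omega), card_le_card inter_subset_left]
  omega

lemma isCherryCenter_iff (hM : 2 ≤ M) (hC : C ⊆ Ioo 1 (M - 1)) (v : vertices M C) :
    (graph M C).IsCherryCenter v ↔ v.1 = (1, 0) ∨ v.1 = (M - 1, 0) ∨ v.1.2 = 1 ∧ v.1.1 ∈ C := by
  have hC' : ∀ i ∈ C, 1 < i ∧ i < M - 1 := fun i hi => mem_Ioo.1 (hC hi)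
  constructor
  · rintro ⟨⟨a, ha⟩, ⟨b, hb⟩, hab, hva, hvb, hleaf_a, hleaf_b⟩
    obtain ⟨v, hv⟩ := v
    rw [ncard_neighborSet (by omega)] at hleaf_a hleaf_b
    rw [graph_adj] at hva hvb
    rw [Ne, Subtype.mk.injEq] at hab
    rw [mem_vertices] at ha hb hv
    simp only [parent] at *
    split_ifs at hleaf_a hleaf_b <;> grind
  · obtain ⟨⟨i, c⟩, hv⟩ := v
    rw [mem_vertices] at hv
    intro hcenter
    simp only [Prod.mk.injEq] at hcenter
    refine ⟨⟨if c = 1 then (i, 2) else if i = 1 then (0, 0) else (M, 0), mem_vertices.2 ?_⟩,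
      ⟨if c = 1 then (i, 3) else (i, 1), mem_vertices.2 ?_⟩, ?_, graph_adj.2 ?_, graph_adj.2 ?_,
      ?_, ?_⟩
    all_goals try rw [ncard_neighborSet (by omega)]
    all_goals simp only [Ne, Subtype.mk.injEq, parent, ite_eq_right_iff] at *
    all_goals split_ifs <;> grind

lemma parentMap_adj {v : vertices M C} (hv : v.1 ≠ (0, 0)) :
    (graph M C).Adj v (parentMap M C v) :=
  (isHeightFunction M C).adj_parent fun h => hv (congrArg Subtype.val h)

lemma dist_le_of_spine {u v : vertices M C} (hu : u.1.2 = 0) (hv : v.1.2 = 0)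
    (huv : u.1.1 ≤ v.1.1) : (graph M C).dist u v ≤ v.1.1 - u.1.1 := by
  induction h : v.1.1 - u.1.1 generalizing v with
  | zero =>
    rw [show u = v from Subtype.ext (Prod.ext (by omega) (by omega)), dist_self]
  | succ n ih =>
    have hadj := parentMap_adj (v := v) (by grind)
    have hpv : (parentMap M C v).1 = (v.1.1 - 1, 0) := by simp [parentMap, parent, hv]
    calc (graph M C).dist u v
        ≤ (graph M C).dist u (parentMap M C v) + (graph M C).dist (parentMap M C v) v :=
          connected.dist_triangle
      _ ≤ n + 1 := by
          rw [dist_comm (u := parentMap M C v), dist_eq_one_iff_adj.2 hadj]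
          grw [ih (by simp [hpv]) (by simp [hpv]; omega) (by simp [hpv]; omega)]

lemma exists_dist_spine_le {w : vertices M C} (hw : w.1.2 ≤ 1) :
    ∃ w' : vertices M C, w'.1 = (w.1.1, 0) ∧ (graph M C).dist w w' ≤ w.1.2 := by
  rcases (show w.1.2 = 0 ∨ w.1.2 = 1 by omega) with h | h
  · exact ⟨w, Prod.ext rfl h, by simp⟩
  · refine ⟨parentMap M C w, by simp [parentMap, parent, h], ?_⟩
    rw [dist_eq_one_iff_adj.2 (parentMap_adj (by grind)), h]

lemma dist_le {u v : vertices M C} (hu : u.1.2 ≤ 1) (hv : v.1.2 ≤ 1) :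
    (graph M C).dist u v ≤ (u.1.1 - v.1.1) + (v.1.1 - u.1.1) + u.1.2 + v.1.2 := by
  obtain ⟨u', hu', huu'⟩ := exists_dist_spine_le hu
  obtain ⟨v', hv', hvv'⟩ := exists_dist_spine_le hv
  have hu'v' : (graph M C).dist u' v' ≤ (u.1.1 - v.1.1) + (v.1.1 - u.1.1) := by
    rcases le_total u.1.1 v.1.1 with h | h
    · grw [dist_le_of_spine (by simp [hu']) (by simp [hv']) (by simp [hu', hv', h])]
      simp [hu', hv']
    · grw [dist_comm, dist_le_of_spine (by simp [hv']) (by simp [hu']) (by simp [hu', hv', h])]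
      simp [hu', hv']
  calc (graph M C).dist u v
      ≤ (graph M C).dist u v' + (graph M C).dist v' v := connected.dist_triangle
    _ ≤ (graph M C).dist u u' + (graph M C).dist u' v' + (graph M C).dist v' v := by
        grw [connected.dist_triangle (v := u')]
    _ ≤ _ := by rw [SimpleGraph.dist_comm (u := v')]; omega

lemma cherryDistances_inter_Ico {k : ℕ} (hC : C ⊆ Ico (k + 3) (2 * k + 3)) :
    (graph (2 * k + 5) C).cherryDistances ∩ Set.Ico (k + 3) (2 * k + 3) = C := by
  have hCk : ∀ i ∈ C, k + 3 ≤ i ∧ i < 2 * k + 3 := fun i hi => mem_Ico.1 (hC hi)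
  have hC' : C ⊆ Ioo 1 (2 * k + 5 - 1) := fun i hi => mem_Ioo.2 (by grind)
  ext d
  constructor
  · rintro ⟨⟨x, y, hx, hy, rfl⟩, hd⟩
    rw [isCherryCenter_iff (by omega) hC'] at hx hy
    have := dist_le (u := x) (v := y) (by grind) (by grind)
    have := height_le_add_dist x y
    have := height_le_add_dist y x
    rw [SimpleGraph.dist_comm] at this
    simp only [Set.mem_Ico, Finset.mem_coe] at hd ⊢
    -- apart from `dist (1,0) (i,1) = i`, these distances are `≤ k + 2` or `≥ 2k + 3`
    grind
  · intro (hd : d ∈ C)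
    have hdk := hCk d hd
    obtain ⟨x, hx⟩ : ∃ x : vertices (2 * k + 5) C, x.1 = (d, 1) :=
      ⟨⟨(d, 1), mem_vertices.2 (by grind)⟩, rfl⟩
    obtain ⟨y, hy⟩ : ∃ y : vertices (2 * k + 5) C, y.1 = (1, 0) :=
      ⟨⟨(1, 0), mem_vertices.2 (by grind)⟩, rfl⟩
    have hxy := dist_le (u := x) (v := y) (by simp [hx]) (by simp [hy])
    have hyx := height_le_add_dist x y
    simp only [hx, hy] at hxy hyx
    refine ⟨⟨x, y, (isCherryCenter_iff (by omega) hC' x).2 (by simp [hx, hd]),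
      (isCherryCenter_iff (by omega) hC' y).2 (by simp [hy]), by omega⟩, by simp; omega⟩

end Caterpillar

lemma exists_trivalentTree_family (k : ℕ) : ∃ F : Fin (2 ^ k) → Σ n : ℕ, SimpleGraph (Fin n),
    (∀ a, IsTrivalentTree (F a).2 ∧ (F a).2.edgeSet.ncard ≤ 6 * k + 9) ∧
      ∀ a b, a ≠ b → ¬Nonempty ((F a).2 ≃g (F b).2) := by
  let e : (Ico (k + 3) (2 * k + 3)).powerset ≃ Fin (2 ^ k) :=
    equivFinOfCardEq (by rw [card_powerset, Nat.card_Ico]; congr 1; omega)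
  have hC (a : Fin (2 ^ k)) : (e.symm a).1 ⊆ Ico (k + 3) (2 * k + 3) :=
    mem_powerset.1 (e.symm a).2
  refine ⟨fun a => ⟨_, (Caterpillar.graph (2 * k + 5) (e.symm a).1).overFin rfl⟩, fun a => ?_,
    fun a b hab ⟨φ⟩ => hab ?_⟩
  · let ψ := (Caterpillar.graph (2 * k + 5) (e.symm a).1).overFinIso rfl
    refine ⟨⟨ψ.isTree_iff.1 (Caterpillar.isTree _ _), fun v => ?_⟩, ?_⟩
    · rw [← ψ.apply_symm_apply v, ψ.ncard_neighborSet]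
      exact Caterpillar.ncard_neighborSet_eq_one_or_three (by omega) _
    · have hcard : #(e.symm a).1 ≤ k :=
        (card_le_card (hC a)).trans (by rw [Nat.card_Ico]; omega)
      have := Caterpillar.ncard_edgeSet_add_one_le (M := 2 * k + 5) (C := (e.symm a).1) (by omega)
      rw [ψ.ncard_edgeSet]
      omega
  · have hD := Iso.cherryDistances_eq
      ((((Caterpillar.graph _ _).overFinIso rfl).trans φ).trans
        ((Caterpillar.graph _ _).overFinIso rfl).symm)
    have hCab : (e.symm a).1 = (e.symm b).1 := by
      rw [← coe_inj, ← Caterpillar.cherryDistances_inter_Ico (hC a), hD,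
        Caterpillar.cherryDistances_inter_Ico (hC b)]
    exact e.symm.injective (Subtype.ext hCab)

theorem trivalent_trees_grow_exponentially :
    ∃ (c : ℝ) (E₀ : ℕ), 1 < c ∧ ∀ E : ℕ, E₀ ≤ E →
      ∃ (N : ℕ) (F : Fin N → Σ n : ℕ, SimpleGraph (Fin n)),
        c ^ E ≤ (N : ℝ) ∧
        (∀ a : Fin N, IsTrivalentTree (F a).2 ∧ ((F a).2.edgeSet).ncard ≤ E) ∧
        (∀ a b : Fin N, a ≠ b → ¬ Nonempty ((F a).2 ≃g (F b).2)) := by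
  refine ⟨2 ^ (12⁻¹ : ℝ), 28, Real.one_lt_rpow (by norm_num) (by norm_num), fun E hE => ?_⟩
  obtain ⟨F, hF, hiso⟩ := exists_trivalentTree_family ((E - 9) / 6)
  refine ⟨_, F, ?_, fun a => ⟨(hF a).1, (hF a).2.trans (by omega)⟩, hiso⟩
  calc (2 ^ (12⁻¹ : ℝ) : ℝ) ^ E ≤ (2 ^ (12⁻¹ : ℝ)) ^ (12 * ((E - 9) / 6)) :=
        pow_le_pow_right₀ (Real.one_le_rpow (by norm_num) (by norm_num)) (by omega)
    _ = ((2 ^ ((E - 9) / 6) : ℕ) : ℝ) := by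
        rw [pow_mul, ← Real.rpow_natCast _ 12, ← Real.rpow_mul (by norm_num)]
        norm_num
end

section
/- The symmetric group S_5 acting on {0,1,2,3,4} acts on the set of 20 dryads (equivalence classes of symbols ab|cde as defined) by permuting the letters, and this action restricted to the alternating group A_5 has exactly two orbits, each of size 10. -/
/-!
A symbol `ab|cde` is a permutation `p` of `Fin 5`, and the dryads are the left cosets `p K` of the
six-element group `K` of symbol equivalences. Both generators of `K` are even, so `K ≤ A₅`, and
since `A₅` is normal in `S₅` the `A₅`-orbit of `p K` is `A₅ p K = p A₅`. Hence the orbits correspond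
to the two cosets of `A₅`, an odd permutation moves each dryad into the other orbit, and every orbit
is a copy of `A₅ / K`, of size `60 / 6 = 10`.
-/

/-- Cyclic permutation of the three positions after the bar: `(2 3 4)`. -/
def cyc : Equiv.Perm (Fin 5) := Equiv.swap 2 4 * Equiv.swap 2 3

/-- Transposition of the positions before the bar together with reversal of
the positions after the bar. -/
def rev : Equiv.Perm (Fin 5) := Equiv.swap 0 1 * Equiv.swap 2 4

/-- The group of equivalences among symbols. -/
def dryadGroup : Subgroup (Equiv.Perm (Fin 5)) := Subgroup.closure {cyc, rev}

/-- A dryad: an equivalence class of symbols `ab|cde`, where the symbol with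
letters `(a,b,c,d,e)` is the permutation sending positions to letters. -/
abbrev Dryad : Type := Equiv.Perm (Fin 5) ⧸ dryadGroup

open MulAction Pointwise

section OrbitsOfNormalSubgroup

variable {G : Type*} [Group G] {N K : Subgroup G}

theorem stabilizer_subgroup_mk_one : stabilizer N ((1 : G) : G ⧸ K) = K.subgroupOf N := by
  ext n
  rw [mem_stabilizer_iff, Subgroup.mem_subgroupOf]
  change ((n : G) • ((1 : G) : G ⧸ K)) = _ ↔ _
  rw [Quotient.smul_coe, smul_eq_mul, mul_one, QuotientGroup.eq, mul_one, inv_mem_iff]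

variable [hN : N.Normal]

theorem mk_mem_orbit_mk_iff_of_le_normal (hKN : K ≤ N) (g x : G) :
    (x : G ⧸ K) ∈ orbit N (g : G ⧸ K) ↔ g⁻¹ * x ∈ N := by
  constructor
  · rintro ⟨n, hn⟩
    have hk : (n * g : G)⁻¹ * x ∈ K := QuotientGroup.eq.mp hn
    have hsplit : g⁻¹ * x = g⁻¹ * n * g * ((n * g : G)⁻¹ * x) := by group
    rw [hsplit]
    exact mul_mem (hN.conj_mem' _ n.2 g) (hKN hk)
  · intro h
    refine ⟨⟨x * g⁻¹, by simpa using hN.conj_mem _ h g⟩, ?_⟩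
    change ((x * g⁻¹ * g : G) : G ⧸ K) = x
    rw [inv_mul_cancel_right]

theorem smul_mem_orbit_iff_of_le_normal (hKN : K ≤ N) (σ : G) (d : G ⧸ K) :
    σ • d ∈ orbit N d ↔ σ ∈ N := by
  induction d using QuotientGroup.induction_on with | H g => ?_
  rw [Quotient.smul_coe, smul_eq_mul, mk_mem_orbit_mk_iff_of_le_normal hKN, ← mul_assoc,
    hN.mem_comm_iff, mul_inv_cancel_left]

theorem orbit_mk_eq_smul_orbit_mk_one (hKN : K ≤ N) (g : G) :
    orbit N (g : G ⧸ K) = g • orbit N ((1 : G) : G ⧸ K) := by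
  ext y
  induction y using QuotientGroup.induction_on with | H x => ?_
  rw [Set.mem_smul_set_iff_inv_smul_mem, Quotient.smul_coe, smul_eq_mul,
    mk_mem_orbit_mk_iff_of_le_normal hKN, mk_mem_orbit_mk_iff_of_le_normal hKN, inv_one, one_mul]

theorem ncard_orbit_of_le_normal (hKN : K ≤ N) (d : G ⧸ K) :
    (orbit N d).ncard = K.relIndex N := by
  induction d using QuotientGroup.induction_on with | H g => ?_
  rw [orbit_mk_eq_smul_orbit_mk_one hKN, Set.ncard_smul_set, ← index_stabilizer,
    stabilizer_subgroup_mk_one]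
  rfl

theorem card_orbitRel_quotient_of_le_normal (hKN : K ≤ N) :
    Nat.card (orbitRel.Quotient N (G ⧸ K)) = N.index := by
  let f : orbitRel.Quotient N (G ⧸ K) → G ⧸ N :=
    _root_.Quotient.lift (Subgroup.quotientMapOfLE hKN) fun a b hab => by
      induction a using QuotientGroup.induction_on with | H x => ?_
      induction b using QuotientGroup.induction_on with | H g => ?_
      exact (QuotientGroup.eq.mpr ((mk_mem_orbit_mk_iff_of_le_normal hKN g x).mp hab)).symm
  refine Nat.card_eq_of_bijective f ⟨fun a b hab => ?_, fun y => ?_⟩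
  · induction a using _root_.Quotient.inductionOn with | h a => ?_
    induction b using _root_.Quotient.inductionOn with | h b => ?_
    induction a using QuotientGroup.induction_on with | H x => ?_
    induction b using QuotientGroup.induction_on with | H g => ?_
    exact _root_.Quotient.sound
      ((mk_mem_orbit_mk_iff_of_le_normal hKN g x).mpr (QuotientGroup.eq.mp hab.symm))
  · induction y using QuotientGroup.induction_on with | H g => ?_
    exact ⟨⟦(g : G ⧸ K)⟧, rfl⟩

end OrbitsOfNormalSubgroup

theorem dryadGroup_le_alternatingGroup : dryadGroup ≤ alternatingGroup (Fin 5) := by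
  rw [dryadGroup, Subgroup.closure_le, Set.insert_subset_iff, Set.singleton_subset_iff]
  constructor <;> rw [SetLike.mem_coe, Equiv.Perm.mem_alternatingGroup] <;> decide

def dryadSymmetries : Finset (Equiv.Perm (Fin 5)) :=
  {1, cyc, cyc * cyc, rev, rev * cyc, rev * cyc * cyc}

set_option maxRecDepth 10000 in
theorem mem_dryadGroup_iff {g : Equiv.Perm (Fin 5)} : g ∈ dryadGroup ↔ g ∈ dryadSymmetries := by
  have mul_closed : ∀ x ∈ dryadSymmetries, ∀ y ∈ dryadSymmetries, x * y ∈ dryadSymmetries := by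
    decide
  have inv_closed : ∀ x ∈ dryadSymmetries, x⁻¹ ∈ dryadSymmetries := by decide
  have hcyc : cyc ∈ dryadGroup := Subgroup.subset_closure (.inl rfl)
  have hrev : rev ∈ dryadGroup := Subgroup.subset_closure (.inr rfl)
  constructor
  · intro hg
    induction hg using Subgroup.closure_induction with
    | mem x hx => rcases hx with rfl | rfl <;> decide
    | one => decide
    | mul x y _ _ hx hy => exact mul_closed x hx y hy
    | inv x _ hx => exact inv_closed x hx
  · intro hg
    simp only [dryadSymmetries, Finset.mem_insert, Finset.mem_singleton] at hg
    rcases hg with rfl | rfl | rfl | rfl | rfl | rfl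
    exacts [one_mem _, hcyc, mul_mem hcyc hcyc, hrev, mul_mem hrev hcyc,
      mul_mem (mul_mem hrev hcyc) hcyc]

theorem card_dryadGroup : Nat.card dryadGroup = 6 := by
  rw [Nat.card_congr (Equiv.subtypeEquivRight fun _ => mem_dryadGroup_iff),
    Nat.card_eq_fintype_card, Fintype.card_coe]
  decide

theorem relIndex_dryadGroup_alternatingGroup :
    dryadGroup.relIndex (alternatingGroup (Fin 5)) = 10 := by
  have hindex : dryadGroup.index = 20 := by
    have h := dryadGroup.card_mul_index
    rw [card_dryadGroup, Nat.card_perm, Nat.card_fin] at h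
    simp only [Nat.factorial] at h
    omega
  have h := Subgroup.relIndex_mul_index dryadGroup_le_alternatingGroup
  rw [alternatingGroup.index_eq_two, hindex] at h
  omega

theorem a5_has_two_orbits_of_ten_on_dryads :
    -- the action of `S₅` by permuting letters is left multiplication on classes:
    (∀ (σ p : Equiv.Perm (Fin 5)),
      σ • (QuotientGroup.mk p : Dryad) = QuotientGroup.mk (σ * p)) ∧
    -- `A₅` has exactly two orbits on the 20 dryads:
    Nat.card (MulAction.orbitRel.Quotient (alternatingGroup (Fin 5)) Dryad) = 2 ∧
    -- each orbit has size 10: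
    (∀ d : Dryad, (MulAction.orbit (alternatingGroup (Fin 5)) d).ncard = 10) ∧
    -- any odd permutation exchanges the two orbits:
    (∀ σ : Equiv.Perm (Fin 5), σ ∉ alternatingGroup (Fin 5) →
      ∀ d : Dryad, σ • d ∉ MulAction.orbit (alternatingGroup (Fin 5)) d) := by
  have hKA := dryadGroup_le_alternatingGroup
  refine ⟨fun σ p => rfl, ?_, fun d => ?_, fun σ hσ d => ?_⟩
  · rw [card_orbitRel_quotient_of_le_normal hKA, alternatingGroup.index_eq_two]
  · rw [ncard_orbit_of_le_normal hKA, relIndex_dryadGroup_alternatingGroup]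
  · rwa [smul_mem_orbit_iff_of_le_normal hKA]
end

section
/- Define a graph on the 20 dryads where ab|cde and a'b'|c'd'e' are joined iff they lie in different A_5-orbits and their duads {a,b} and {a',b'} are disjoint. Then every dryad has exactly 3 neighbors; specifically ab|cde is joined exactly to dc|abe, ce|abd, and ed|abc. -/
/-- Two dryads are related iff they lie in different `A₅`-orbits and their
duads are disjoint. -/
def dryadRel (x y : Dryad) : Prop :=
  x ∉ MulAction.orbit (alternatingGroup (Fin 5)) y ∧
  ∀ p q : Equiv.Perm (Fin 5),
    (QuotientGroup.mk p : Dryad) = x → (QuotientGroup.mk q : Dryad) = y →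
    ({p 0, p 1} : Set (Fin 5)) ∩ {q 0, q 1} = ∅

/-- The graph on the 20 dryads. -/
def dryadGraph : SimpleGraph Dryad := SimpleGraph.fromRel dryadRel

/-- Position permutation sending `ab|cde` to `dc|abe`. -/
def τ₁ : Equiv.Perm (Fin 5) := Equiv.swap 0 3 * Equiv.swap 3 1 * Equiv.swap 1 2

/-- Position permutation sending `ab|cde` to `ce|abd`. -/
def τ₂ : Equiv.Perm (Fin 5) := Equiv.swap 0 2 * (Equiv.swap 1 4 * Equiv.swap 4 3)

/-- Position permutation sending `ab|cde` to `ed|abc`. -/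
def τ₃ : Equiv.Perm (Fin 5) := Equiv.swap 0 4 * Equiv.swap 4 2 * Equiv.swap 1 3

/-! A symbol's symmetry group is the group of even permutations of the positions that
preserve the duad positions `{0, 1}`.  Hence both the sign of a symbol (its `A₅`-orbit) and
its duad are invariants of the dryad, and whether the dryads of `p` and `p * r` are adjacent
depends only on `r`: it must be odd and move both duad positions off the duad.  These
eighteen permutations make up exactly the three cosets of `τ₁`, `τ₂`, `τ₃`. -/

open Equiv Pointwise

theorem QuotientGroup.mk_mul_right_inj {G : Type*} [Group G] {s : Subgroup G} (p a b : G) :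
    ((p * a : G) : G ⧸ s) = ↑(p * b) ↔ (a : G ⧸ s) = b := by
  simp only [QuotientGroup.eq, mul_inv_rev, mul_assoc, inv_mul_cancel_left]

def duadStabilizer : Subgroup (Perm (Fin 5)) :=
  alternatingGroup (Fin 5) ⊓ MulAction.stabilizer (Perm (Fin 5)) ({0, 1} : Finset (Fin 5))

instance : DecidablePred (· ∈ duadStabilizer) := fun σ =>
  decidable_of_iff (Perm.sign σ = 1 ∧ σ • ({0, 1} : Finset (Fin 5)) = {0, 1})
    (by simp only [duadStabilizer, Subgroup.mem_inf, Perm.mem_alternatingGroup,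
      MulAction.mem_stabilizer_iff])

set_option maxRecDepth 10000 in
theorem dryadGroup_eq_duadStabilizer : dryadGroup = duadStabilizer := by
  have hcyc : cyc ∈ dryadGroup := Subgroup.subset_closure (by simp)
  have hrev : rev ∈ dryadGroup := Subgroup.subset_closure (by simp)
  refine le_antisymm ((Subgroup.closure_le _).2 ?_) fun σ hσ => ?_
  · simp only [Set.insert_subset_iff, Set.singleton_subset_iff, SetLike.mem_coe]
    decide
  · obtain ⟨i, j, rfl⟩ : ∃ i : Fin 2, ∃ j : Fin 3, σ = rev ^ (i : ℕ) * cyc ^ (j : ℕ) := by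
      revert σ; decide
    exact mul_mem (pow_mem hrev _) (pow_mem hcyc _)

namespace Dryad

theorem coe_eq_coe_iff {a b : Perm (Fin 5)} : (a : Dryad) = b ↔ a⁻¹ * b ∈ duadStabilizer := by
  rw [QuotientGroup.eq, dryadGroup_eq_duadStabilizer]

theorem sign_eq_of_coe_eq {a b : Perm (Fin 5)} (h : (a : Dryad) = b) :
    Perm.sign a = Perm.sign b := by
  have hk : Perm.sign (a⁻¹ * b) = 1 := (coe_eq_coe_iff.1 h).1
  rwa [map_mul, map_inv, inv_mul_eq_one] at hk

theorem duad_eq_of_coe_eq {a b : Perm (Fin 5)} (h : (a : Dryad) = b) :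
    ({a 0, a 1} : Set (Fin 5)) = {b 0, b 1} := by
  have hk : (a⁻¹ * b) • ({0, 1} : Finset (Fin 5)) = {0, 1} := (coe_eq_coe_iff.1 h).2
  have key : b • ({0, 1} : Finset (Fin 5)) = a • {0, 1} := by
    rw [← mul_inv_cancel_left a b, mul_smul, hk]
  simpa [Finset.smul_finset_insert, Finset.smul_finset_singleton] using
    congrArg ((↑) : Finset (Fin 5) → Set (Fin 5)) key.symm

theorem mem_orbit_alternatingGroup_iff {a b : Perm (Fin 5)} :
    (a : Dryad) ∈ MulAction.orbit (alternatingGroup (Fin 5)) (b : Dryad) ↔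
      Perm.sign a = Perm.sign b := by
  constructor
  · rintro ⟨⟨g, hg⟩, h⟩
    have h' : ((g * b : Perm (Fin 5)) : Dryad) = a := h
    rw [← sign_eq_of_coe_eq h', Perm.sign_mul, Perm.mem_alternatingGroup.1 hg, one_mul]
  · intro h
    refine ⟨⟨a * b⁻¹, ?_⟩, ?_⟩
    · rw [Perm.mem_alternatingGroup, map_mul, map_inv, h, mul_inv_cancel]
    · show ((a * b⁻¹ * b : Perm (Fin 5)) : Dryad) = a
      rw [inv_mul_cancel_right]

end Dryad

open Dryad

theorem dryadRel_coe_iff (a b : Perm (Fin 5)) :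
    dryadRel a b ↔
      Perm.sign a ≠ Perm.sign b ∧ Disjoint ({a 0, a 1} : Set (Fin 5)) {b 0, b 1} := by
  rw [dryadRel, mem_orbit_alternatingGroup_iff, Set.disjoint_iff_inter_eq_empty]
  refine and_congr_right fun _ => ⟨fun h => h a b rfl rfl, ?_⟩
  rintro h p q hp hq
  rwa [duad_eq_of_coe_eq hp, duad_eq_of_coe_eq hq]

theorem dryadGraph_adj_coe_iff {a b : Perm (Fin 5)} :
    dryadGraph.Adj (a : Dryad) b ↔
      Perm.sign a ≠ Perm.sign b ∧ Disjoint ({a 0, a 1} : Set (Fin 5)) {b 0, b 1} := by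
  rw [dryadGraph, SimpleGraph.fromRel_adj, dryadRel_coe_iff, dryadRel_coe_iff,
    ne_comm (a := Perm.sign b), disjoint_comm, or_self]
  exact ⟨And.right, fun h => ⟨fun hab => h.1 (sign_eq_of_coe_eq hab), h⟩⟩

theorem dryadGraph_adj_coe_mul_iff (p r : Perm (Fin 5)) :
    dryadGraph.Adj (p : Dryad) ↑(p * r) ↔
      Perm.sign r ≠ 1 ∧ Disjoint ({0, 1} : Finset (Fin 5)) {r 0, r 1} := by
  rw [dryadGraph_adj_coe_iff, map_mul, Ne, left_eq_mul, ← Finset.disjoint_coe]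
  simp only [Perm.mul_apply, Finset.coe_insert, Finset.coe_singleton]
  rw [← Set.image_pair, ← Set.image_pair p (r 0), Set.disjoint_image_iff p.injective]

set_option maxRecDepth 10000 in
theorem sign_ne_one_and_disjoint_duad_iff (r : Perm (Fin 5)) :
    Perm.sign r ≠ 1 ∧ Disjoint ({0, 1} : Finset (Fin 5)) {r 0, r 1} ↔
      (r : Dryad) = τ₁ ∨ (r : Dryad) = τ₂ ∨ (r : Dryad) = τ₃ := by
  simp only [coe_eq_coe_iff]
  revert r; decide

theorem dryad_graph_is_three_regular (p : Equiv.Perm (Fin 5)) :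
    dryadGraph.neighborSet (QuotientGroup.mk p) =
      ({QuotientGroup.mk (p * τ₁), QuotientGroup.mk (p * τ₂),
        QuotientGroup.mk (p * τ₃)} : Set Dryad) ∧
    (dryadGraph.neighborSet (QuotientGroup.mk p)).ncard = 3 := by
  have hnbr : dryadGraph.neighborSet (p : Dryad) = {↑(p * τ₁), ↑(p * τ₂), ↑(p * τ₃)} := by
    ext y
    obtain ⟨q, rfl⟩ := QuotientGroup.mk_surjective y
    rw [SimpleGraph.mem_neighborSet, ← mul_inv_cancel_left p q, dryadGraph_adj_coe_mul_iff,
      sign_ne_one_and_disjoint_duad_iff]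
    simp only [Set.mem_insert_iff, Set.mem_singleton_iff, QuotientGroup.mk_mul_right_inj]
  refine ⟨hnbr, Set.ncard_eq_three.2 ⟨_, _, _, ?_, ?_, ?_, hnbr⟩⟩ <;>
    rw [Ne, QuotientGroup.mk_mul_right_inj, coe_eq_coe_iff] <;> decide
end

section
/- The 3-regular graph on 20 dryads, where ab|cde is joined to dc|abe, ce|abd, and ed|abc, is a connected double cover of the Petersen graph: the map sending each dryad ab|cde to its duad {a,b} is a 2-to-1 graph covering onto the Petersen graph (vertices: 2-element subsets of {0,...,4}, edges: disjoint pairs), and the covering graph is bipartite (equivalently, every circuit has even length). -/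
/-- The vertices of the Petersen graph: 2-element subsets of `{0,…,4}`. -/
abbrev PetersenV : Type := {s : Finset (Fin 5) // s.card = 2}

/-- The Petersen graph: duads are adjacent iff disjoint. -/
def petersen : SimpleGraph PetersenV :=
  SimpleGraph.fromRel (fun a b => Disjoint a.1 b.1)

open Equiv MulAction Pointwise

namespace SimpleGraph

variable {Γ V : Type*} [Group Γ] [MulAction Γ V] {G : SimpleGraph V}

theorem Reachable.smul (hG : ∀ (g : Γ) {x y : V}, G.Adj x y → G.Adj (g • x) (g • y)) (g : Γ)
    {x y : V} (h : G.Reachable x y) : G.Reachable (g • x) (g • y) :=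
  h.map ⟨(g • ·), hG g⟩

theorem preconnected_of_closure_eq_top [IsPretransitive Γ V]
    (hG : ∀ (g : Γ) {x y : V}, G.Adj x y → G.Adj (g • x) (g • y)) (v : V) {S : Set Γ}
    (hS : Subgroup.closure S = ⊤) (hSv : ∀ s ∈ S, G.Reachable v (s • v)) : G.Preconnected := by
  have hreach (g : Γ) : G.Reachable v (g • v) := by
    have hg : g ∈ Subgroup.closure S := hS ▸ Subgroup.mem_top g
    induction hg using Subgroup.closure_induction with
    | mem s hs => exact hSv s hs
    | one => rw [one_smul]
    | mul a b _ _ ha hb => rw [mul_smul]; exact ha.trans (hb.smul hG a)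
    | inv a _ ha => simpa using (ha.smul hG a⁻¹).symm
  intro x y
  obtain ⟨g, rfl⟩ := exists_smul_eq Γ v x
  obtain ⟨h, rfl⟩ := exists_smul_eq Γ v y
  exact (hreach g).symm.trans (hreach h)

end SimpleGraph

theorem Equiv.Perm.smul_finset_pair {α : Type*} [DecidableEq α] (p : Perm α) (a b : α) :
    p • ({a, b} : Finset α) = {p a, p b} := by
  simp [Finset.smul_finset_insert]

set_option maxRecDepth 10000 in
theorem dryadGroup_eq : dryadGroup =
    alternatingGroup (Fin 5) ⊓ stabilizer (Perm (Fin 5)) ({0, 1} : Finset (Fin 5)) := by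
  refine le_antisymm ?_ fun g hg => ?_
  · rw [dryadGroup, Subgroup.closure_le]
    rintro g (rfl | rfl) <;>
      simp only [SetLike.mem_coe, Subgroup.mem_inf, Perm.mem_alternatingGroup, mem_stabilizer_iff,
        Perm.smul_finset_pair] <;> decide
  · have hcyc : cyc ∈ dryadGroup := Subgroup.subset_closure (by simp)
    have hrev : rev ∈ dryadGroup := Subgroup.subset_closure (by simp)
    have key : ∀ g : Perm (Fin 5), Perm.sign g = 1 → ({g 0, g 1} : Finset (Fin 5)) = {0, 1} →
        ∃ i : Fin 2, ∃ j : Fin 3, g = rev ^ (i : ℕ) * cyc ^ (j : ℕ) := by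
      decide
    simp only [Subgroup.mem_inf, Perm.mem_alternatingGroup, mem_stabilizer_iff,
      Perm.smul_finset_pair] at hg
    obtain ⟨i, j, rfl⟩ := key g hg.1 hg.2
    exact mul_mem (pow_mem hrev _) (pow_mem hcyc _)

set_option maxRecDepth 10000 in
theorem Equiv.Perm.closure_fin_five_eq_top :
    Subgroup.closure ({swap 0 2 * swap 1 3 * swap 3 4, swap 0 3 * swap 0 1 * swap 0 4} :
      Set (Perm (Fin 5))) = ⊤ := by
  set n : Perm (Fin 5) := swap 0 2 * swap 1 3 * swap 3 4
  set m : Perm (Fin 5) := swap 0 3 * swap 0 1 * swap 0 4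
  have h5 : (Fintype.card (Fin 5)).Prime := by norm_num
  have hcycle : (n * m).IsCycle := by
    refine Perm.isCycle_of_prime_order'' h5 ?_
    have : Fact (Nat.Prime 5) := ⟨by norm_num⟩
    rw [Fintype.card_fin]
    exact orderOf_eq_prime (by decide) (by decide)
  have hswap : (n ^ 3).IsSwap := ⟨0, 2, by decide, by decide⟩
  rw [eq_top_iff, ← Perm.closure_prime_cycle_swap h5 hcycle (by decide) hswap,
    Subgroup.closure_le, Set.insert_subset_iff, Set.singleton_subset_iff]
  have hn : n ∈ Subgroup.closure {n, m} := Subgroup.subset_closure (by simp)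
  have hm : m ∈ Subgroup.closure {n, m} := Subgroup.subset_closure (by simp)
  exact ⟨mul_mem hn hm, pow_mem hn 3⟩

theorem petersen_adj_iff {v w : PetersenV} : petersen.Adj v w ↔ Disjoint v.1 w.1 := by
  rw [petersen, SimpleGraph.fromRel_adj, disjoint_comm, or_self, and_iff_right_iff_imp]
  rintro h rfl
  rw [Finset.disjoint_self_iff_empty, ← Finset.card_eq_zero, v.2] at h
  exact two_ne_zero h

namespace Dryad

open QuotientGroup

theorem mk_eq_mk_iff {p q : Perm (Fin 5)} : (mk p : Dryad) = mk q ↔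
    Perm.sign p = Perm.sign q ∧ p • ({0, 1} : Finset (Fin 5)) = q • {0, 1} := by
  rw [QuotientGroup.eq, dryadGroup_eq, Subgroup.mem_inf, Perm.mem_alternatingGroup,
    mem_stabilizer_iff, map_mul, map_inv, inv_mul_eq_one, mul_smul, inv_smul_eq_iff]
  exact and_congr_right fun _ => eq_comm

def sign : Dryad → ℤˣ :=
  Quotient.lift (fun p => Perm.sign p) fun _ _ h => (mk_eq_mk_iff.mp (Quotient.sound h)).1

def duad : Dryad → PetersenV :=
  Quotient.lift (fun p => ⟨p • {0, 1}, by rw [Finset.card_smul_finset]; rfl⟩)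
    fun _ _ h => Subtype.ext (mk_eq_mk_iff.mp (Quotient.sound h)).2

theorem sign_mk (p : Perm (Fin 5)) : sign (mk p) = Perm.sign p := rfl

theorem duad_mk (p : Perm (Fin 5)) : (duad (mk p)).1 = {p 0, p 1} :=
  Perm.smul_finset_pair p 0 1

theorem ext {x y : Dryad} (hduad : duad x = duad y) (hsign : sign x = sign y) : x = y := by
  induction x using QuotientGroup.induction_on
  induction y using QuotientGroup.induction_on
  exact mk_eq_mk_iff.mpr ⟨hsign, congrArg Subtype.val hduad⟩

theorem sign_smul (g : Perm (Fin 5)) (x : Dryad) : sign (g • x) = Perm.sign g * sign x := by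
  induction x using QuotientGroup.induction_on
  exact map_mul _ _ _

theorem duad_smul (g : Perm (Fin 5)) (x : Dryad) : (duad (g • x)).1 = g • (duad x).1 := by
  induction x using QuotientGroup.induction_on
  exact mul_smul _ _ _

theorem exists_duad_sign (w : PetersenV) (s : ℤˣ) : ∃ x : Dryad, duad x = w ∧ sign x = s := by
  obtain ⟨a, b, hab, hw⟩ := Finset.card_eq_two.mp w.2
  obtain ⟨p, hp0, hp1⟩ := is_two_pretransitive_iff.mp (Perm.isMultiplyPretransitive (Fin 5) 2)
    (zero_ne_one' (Fin 5)) hab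
  have hp : ({p 0, p 1} : Finset (Fin 5)) = w.1 := by
    rw [← Perm.smul_def, hp0, ← Perm.smul_def, hp1, hw]
  rcases eq_or_ne (Perm.sign p) s with hs | hs
  · exact ⟨mk p, Subtype.ext (by rw [duad_mk, hp]), hs⟩
  · refine ⟨mk (p * swap 0 1), Subtype.ext ?_, ?_⟩
    · rw [duad_mk, ← hp, Perm.mul_apply, Perm.mul_apply, swap_apply_left, swap_apply_right,
        Finset.pair_comm]
    · rw [sign_mk, map_mul, Perm.sign_swap zero_ne_one, mul_neg_one,
        Int.units_ne_iff_eq_neg.mp hs, neg_neg]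

theorem mem_orbit_alternatingGroup_iff_s15 {x y : Dryad} :
    x ∈ orbit (alternatingGroup (Fin 5)) y ↔ sign x = sign y := by
  rw [mem_orbit_iff]
  constructor
  · rintro ⟨g, rfl⟩
    change sign ((g : Perm (Fin 5)) • y) = _
    rw [sign_smul, Perm.mem_alternatingGroup.mp g.2, one_mul]
  · induction x using QuotientGroup.induction_on with | H p =>
    induction y using QuotientGroup.induction_on with | H q =>
    rw [sign_mk, sign_mk]
    intro h
    refine ⟨⟨p * q⁻¹, ?_⟩, ?_⟩
    · rw [Perm.mem_alternatingGroup, map_mul, map_inv]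
      exact mul_inv_eq_one.mpr h
    · change (mk (p * q⁻¹ * q) : Dryad) = mk p
      rw [inv_mul_cancel_right]

theorem dryadRel_iff {x y : Dryad} :
    dryadRel x y ↔ sign x ≠ sign y ∧ Disjoint (duad x).1 (duad y).1 := by
  have hpair (p : Perm (Fin 5)) : ({p 0, p 1} : Set (Fin 5)) = ↑(duad (mk p)).1 := by
    rw [duad_mk, Finset.coe_pair]
  refine and_congr (not_congr mem_orbit_alternatingGroup_iff_s15) ⟨fun h => ?_, fun h p q hp hq => ?_⟩
  · obtain ⟨p, rfl⟩ := mk_surjective x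
    obtain ⟨q, rfl⟩ := mk_surjective y
    rw [← Finset.disjoint_coe, Set.disjoint_iff_inter_eq_empty, ← hpair, ← hpair]
    exact h p q rfl rfl
  · rw [hpair, hpair, hp, hq, ← Set.disjoint_iff_inter_eq_empty, Finset.disjoint_coe]
    exact h

theorem adj_iff {x y : Dryad} :
    dryadGraph.Adj x y ↔ sign x ≠ sign y ∧ Disjoint (duad x).1 (duad y).1 := by
  rw [dryadGraph, SimpleGraph.fromRel_adj, dryadRel_iff, dryadRel_iff, ne_comm (a := sign y),
    disjoint_comm (a := (duad y).1), or_self, and_iff_right_iff_imp]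
  rintro ⟨hs, -⟩ rfl
  exact hs rfl

theorem adj_smul (g : Perm (Fin 5)) {x y : Dryad} (h : dryadGraph.Adj x y) :
    dryadGraph.Adj (g • x) (g • y) := by
  rw [adj_iff, sign_smul, sign_smul, duad_smul, duad_smul] at *
  exact ⟨(mul_right_injective _).ne h.1, (Finset.disjoint_image (MulAction.injective g)).mpr h.2⟩

theorem ncard_preimage_duad (w : PetersenV) : (duad ⁻¹' {w}).ncard = 2 := by
  obtain ⟨x, hx, hxs⟩ := exists_duad_sign w 1
  obtain ⟨y, hy, hys⟩ := exists_duad_sign w (-1)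
  have hxy : x ≠ y := by
    rintro rfl
    exact units_ne_neg_self 1 (hxs.symm.trans hys)
  convert Set.ncard_pair hxy
  ext z
  simp only [Set.mem_preimage, Set.mem_singleton_iff, Set.mem_insert_iff]
  refine ⟨fun hz => ?_, by rintro (rfl | rfl) <;> assumption⟩
  rcases Int.units_eq_one_or (sign z) with hs | hs
  · exact Or.inl (ext (hz.trans hx.symm) (hs.trans hxs.symm))
  · exact Or.inr (ext (hz.trans hy.symm) (hs.trans hys.symm))

theorem bijOn_duad_neighborSet (x : Dryad) :
    Set.BijOn duad (dryadGraph.neighborSet x) (petersen.neighborSet (duad x)) := by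
  have hsign {y : Dryad} (hy : dryadGraph.Adj x y) : sign y = -sign x :=
    Int.units_ne_iff_eq_neg.mp (adj_iff.mp hy).1.symm
  refine ⟨fun y hy => petersen_adj_iff.mpr (adj_iff.mp hy).2,
    fun y hy z hz h => ext h ((hsign hy).trans (hsign hz).symm), fun w hw => ?_⟩
  obtain ⟨y, rfl, hy⟩ := exists_duad_sign w (-sign x)
  exact ⟨y, adj_iff.mpr ⟨hy ▸ units_ne_neg_self _, petersen_adj_iff.mp hw⟩, rfl⟩

theorem connected_dryadGraph : dryadGraph.Connected := by
  have hbase (n : Perm (Fin 5)) (hn : Perm.sign n = -1)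
      (hdisj : Disjoint ({0, 1} : Finset (Fin 5)) {n 0, n 1}) :
      dryadGraph.Reachable (mk 1) (n • mk 1) := by
    refine SimpleGraph.Adj.reachable (adj_iff.mpr ?_)
    rw [MulAction.Quotient.smul_mk, smul_eq_mul, mul_one, sign_mk, sign_mk, duad_mk, duad_mk, hn]
    exact ⟨by decide, hdisj⟩
  refine ⟨SimpleGraph.preconnected_of_closure_eq_top (fun g _ _ => adj_smul g) (mk 1)
    Perm.closure_fin_five_eq_top ?_⟩
  rintro s (rfl | rfl) <;> exact hbase _ (by decide) (by decide)

end Dryad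

theorem dryad_graph_is_bipartite_double_cover_of_petersen :
    ∃ π : Dryad → PetersenV,
      -- `π` sends the dryad `ab|cde` to its duad `{a, b}`:
      (∀ p : Equiv.Perm (Fin 5),
        (π (QuotientGroup.mk p)).1 = ({p 0, p 1} : Finset (Fin 5))) ∧
      -- `π` is a graph homomorphism:
      (∀ x y : Dryad, dryadGraph.Adj x y → petersen.Adj (π x) (π y)) ∧
      -- surjective and 2-to-1:
      Function.Surjective π ∧
      (∀ w : PetersenV, (π ⁻¹' {w}).ncard = 2) ∧
      -- a local isomorphism (bijective on neighbourhoods):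
      (∀ x : Dryad, Set.BijOn π (dryadGraph.neighborSet x)
        (petersen.neighborSet (π x))) ∧
      -- the covering graph is connected and bipartite:
      dryadGraph.Connected ∧ dryadGraph.Colorable 2 := by
  refine ⟨Dryad.duad, Dryad.duad_mk, fun x y h => petersen_adj_iff.mpr (Dryad.adj_iff.mp h).2,
    fun w => (Dryad.exists_duad_sign w 1).imp fun _ h => h.1, Dryad.ncard_preimage_duad,
    Dryad.bijOn_duad_neighborSet, Dryad.connected_dryadGraph, ?_⟩
  exact (SimpleGraph.Coloring.mk Dryad.sign fun h => (Dryad.adj_iff.mp h).1).colorable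
end
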